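/- Let A, B ⊆ F_{Q,Q'} be finite sets of positive rationals and x ≥ 1 a real number. If the sum over coprime pairs (r,s) with rs > x of |A_{r/s}||B_{r/s}| is at most |A||B|/2, then |A/B| ≥ |A||B| / (2 T² x (1 + log x)), where T = max_{m ≤ QQ'} τ(m), A_{r/s} = {a/a' ∈ A : r | a, s | a'} (fractions in lowest terms), and similarly B_{r/s}. -/

import Mathlib

open scoped Pointwise

/-- The set `F_{Q,Q'} = {q/q' : 1 ≤ q ≤ Q, 1 ≤ q' ≤ Q', q, q' positive integers}`. -/
def farey (Q Q' : ℝ) : Set ℚ :=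
  {z : ℚ | ∃ q q' : ℕ, 1 ≤ q ∧ (q : ℝ) ≤ Q ∧ 1 ≤ q' ∧ (q' : ℝ) ≤ Q' ∧ z = (q : ℚ) / (q' : ℚ)}

/-- `A_{r/s} = {a/a' ∈ A : r ∣ a, s ∣ a'}` (fractions in lowest terms). -/
def subAt (A : Finset ℚ) (r s : ℕ) : Finset ℚ :=
  A.filter (fun a : ℚ => r ∣ a.num.toNat ∧ s ∣ a.den)

/-- `T(x) = max_{1 ≤ m ≤ x} τ(m)`. -/
noncomputable def Tmax (x : ℝ) : ℕ := (Finset.Icc 1 ⌊x⌋₊).sup (fun m => m.divisors.card)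

/-!
Write `a = n/d`, `b = n'/d'` in lowest terms and attach to the pair `(a, b)` the coprime pair
`(r, s) = (gcd(n, n'), gcd(d, d'))`. Then `a ∈ A_{r/s}` and `b ∈ B_{r/s}`, and
`a/b = (n/r)(d'/s) / ((n'/r)(d/s))` in lowest terms. Hence, for fixed `(r, s)` and fixed
`q = a/b`, the pair `(a, b)` is determined by the divisors `n/r` of `num q` and `d/s` of `den q`,
so each `(r, s)` carries at most `T² |A/B|` pairs. There are at most `x (1 + log x)` pairs with
`rs ≤ x`, and by hypothesis the pairs with `rs > x` account for at most half of `|A||B|`.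
-/

open Finset

namespace Rat

theorem coprime_num_toNat_den {a : ℚ} (ha : 0 ≤ a) : a.num.toNat.Coprime a.den := by
  have : a.num.toNat = a.num.natAbs := by have := Rat.num_nonneg.mpr ha; omega
  exact this ▸ a.reduced

theorem num_toNat_div_den {a : ℚ} (ha : 0 ≤ a) : (a.num.toNat : ℚ) / a.den = a := by
  have : ((a.num.toNat : ℤ) : ℚ) = a.num := by rw [Int.toNat_of_nonneg (Rat.num_nonneg.mpr ha)]
  rw [← Int.cast_natCast, this, Rat.num_div_den]

theorem num_toNat_natCast_div {u v : ℕ} (hv : 0 < v) (h : u.Coprime v) :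
    ((u : ℚ) / v).num.toNat = u := by
  have := num_div_eq_of_coprime (a := u) (b := v) (by exact_mod_cast hv) (by simpa using h)
  rw [Int.cast_natCast, Int.cast_natCast] at this
  rw [this, Int.toNat_natCast]

theorem den_natCast_div {u v : ℕ} (hv : 0 < v) (h : u.Coprime v) : ((u : ℚ) / v).den = v := by
  have := den_div_eq_of_coprime (a := u) (b := v) (by exact_mod_cast hv) (by simpa using h)
  rw [Int.cast_natCast, Int.cast_natCast] at this
  exact_mod_cast this

end Rat

def numDenGcd (a b : ℚ) : ℕ × ℕ := (a.num.toNat.gcd b.num.toNat, a.den.gcd b.den)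

theorem coprime_numDenGcd {a : ℚ} (ha : 0 ≤ a) (b : ℚ) :
    (numDenGcd a b).1.Coprime (numDenGcd a b).2 :=
  ((Rat.coprime_num_toNat_den ha).coprime_dvd_left (Nat.gcd_dvd_left _ _)).coprime_dvd_right
    (Nat.gcd_dvd_left _ _)

theorem num_den_div_of_pos {a b : ℚ} (ha : 0 < a) (hb : 0 < b) :
    (a / b).num.toNat = a.num.toNat / (numDenGcd a b).1 * (b.den / (numDenGcd a b).2) ∧
    (a / b).den = b.num.toNat / (numDenGcd a b).1 * (a.den / (numDenGcd a b).2) := by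
  have hnd := Rat.coprime_num_toNat_den ha.le
  have hnd' := Rat.coprime_num_toNat_den hb.le
  have hr : 0 < (numDenGcd a b).1 := Nat.gcd_pos_of_pos_left _ (by simpa using Rat.num_pos.mpr ha)
  have hs : 0 < (numDenGcd a b).2 := Nat.gcd_pos_of_pos_left _ a.den_pos
  set r := (numDenGcd a b).1
  set s := (numDenGcd a b).2
  obtain ⟨n₁, n₂, hn₁₂, hn, hn'⟩ :
      ∃ n₁ n₂, n₁.Coprime n₂ ∧ a.num.toNat = n₁ * r ∧ b.num.toNat = n₂ * r :=
    Nat.exists_coprime _ _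
  obtain ⟨d₁, d₂, hd₁₂, hd, hd'⟩ : ∃ d₁ d₂, d₁.Coprime d₂ ∧ a.den = d₁ * s ∧ b.den = d₂ * s :=
    Nat.exists_coprime _ _
  clear_value r s
  have hn₂ : 0 < n₂ := Nat.pos_of_mul_pos_right (b := r) (hn' ▸ by simpa using hb)
  have hd₁ : 0 < d₁ := Nat.pos_of_mul_pos_right (hd ▸ a.den_pos)
  rw [hn, hd] at hnd
  rw [hn', hd'] at hnd'
  have hcop : (n₁ * d₂).Coprime (n₂ * d₁) :=
    .mul_left (.mul_right hn₁₂ hnd.coprime_mul_right.coprime_mul_right_right)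
      (.mul_right hnd'.coprime_mul_right.coprime_mul_right_right.symm hd₁₂.symm)
  have hdiv : a / b = ((n₁ * d₂ : ℕ) : ℚ) / (n₂ * d₁ : ℕ) := by
    rw [← Rat.num_toNat_div_den ha.le, ← Rat.num_toNat_div_den hb.le, hn, hn', hd, hd']
    have : (n₂ : ℚ) ≠ 0 := by positivity
    have : (d₁ : ℚ) ≠ 0 := by positivity
    push_cast
    field_simp
  rw [hdiv, Rat.num_toNat_natCast_div (by positivity) hcop,
    Rat.den_natCast_div (by positivity) hcop, hn, hn', hd, hd',
    Nat.mul_div_cancel _ hr, Nat.mul_div_cancel _ hr, Nat.mul_div_cancel _ hs,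
    Nat.mul_div_cancel _ hs]
  exact ⟨rfl, rfl⟩

theorem card_filter_numDenGcd_eq_le_card_mul_card (A B : Finset ℚ) (p : ℕ × ℕ) :
    #{ab ∈ A ×ˢ B | numDenGcd ab.1 ab.2 = p} ≤ #(subAt A p.1 p.2) * #(subAt B p.1 p.2) := by
  rw [← card_product]
  refine card_le_card ?_
  rintro ⟨a, b⟩ hab
  obtain ⟨⟨ha, hb⟩, rfl⟩ : (a ∈ A ∧ b ∈ B) ∧ numDenGcd a b = p := by simpa using hab
  exact mem_product.2 ⟨mem_filter.2 ⟨ha, Nat.gcd_dvd_left _ _, Nat.gcd_dvd_left _ _⟩,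
    mem_filter.2 ⟨hb, Nat.gcd_dvd_right _ _, Nat.gcd_dvd_right _ _⟩⟩

theorem card_filter_numDenGcd_div_eq_le {A B : Finset ℚ} (hA : ∀ a ∈ A, 0 < a)
    (hB : ∀ b ∈ B, 0 < b) (p : ℕ × ℕ) (q : ℚ) :
    #{ab ∈ A ×ˢ B | numDenGcd ab.1 ab.2 = p ∧ ab.1 / ab.2 = q}
      ≤ #q.num.toNat.divisors * #q.den.divisors := by
  rw [← card_product]
  refine card_le_card_of_injOn (fun ab => (ab.1.num.toNat / p.1, ab.1.den / p.2)) ?_ ?_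
  · rintro ⟨a, b⟩ hab
    simp only [coe_filter, mem_product, Set.mem_ofPred_eq] at hab
    obtain ⟨⟨haA, hbB⟩, rfl, rfl⟩ := hab
    obtain ⟨hnum, hden⟩ := num_den_div_of_pos (hA a haA) (hB b hbB)
    have hpos : 0 < (a / b).num.toNat := by simpa using div_pos (hA a haA) (hB b hbB)
    simp only [coe_product, Set.mem_prod, mem_coe, Nat.mem_divisors]
    exact ⟨⟨Dvd.intro _ hnum.symm, hpos.ne'⟩, ⟨Dvd.intro_left _ hden.symm, (a / b).den_nz⟩⟩
  · rintro ⟨a, b⟩ hab ⟨a', b'⟩ hab' h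
    simp only [coe_filter, mem_product, Set.mem_ofPred_eq] at hab hab'
    obtain ⟨⟨haA, hbB⟩, rfl, hq⟩ := hab
    obtain ⟨⟨ha'A, hb'B⟩, hp', rfl⟩ := hab'
    simp only [numDenGcd, Prod.mk.injEq] at h hp'
    have hnum : a.num.toNat = a'.num.toNat :=
      (Nat.div_left_inj (Nat.gcd_dvd_left _ _) (hp'.1 ▸ Nat.gcd_dvd_left _ _)).1 h.1
    have hden : a.den = a'.den :=
      (Nat.div_left_inj (Nat.gcd_dvd_left _ _) (hp'.2 ▸ Nat.gcd_dvd_left _ _)).1 h.2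
    obtain rfl : a = a' := by
      rw [← Rat.num_toNat_div_den (hA a haA).le, ← Rat.num_toNat_div_den (hA a' ha'A).le, hnum,
        hden]
    rw [← div_div_cancel₀ (hA a haA).ne' (b := b), hq, div_div_cancel₀ (hA a haA).ne']

theorem card_filter_numDenGcd_eq_le {A B : Finset ℚ} (hA : ∀ a ∈ A, 0 < a) (hB : ∀ b ∈ B, 0 < b)
    {T : ℕ} (hT : ∀ q ∈ A / B, #q.num.toNat.divisors ≤ T ∧ #q.den.divisors ≤ T) (p : ℕ × ℕ) :
    #{ab ∈ A ×ˢ B | numDenGcd ab.1 ab.2 = p} ≤ #(A / B) * T ^ 2 := by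
  have hmaps : ∀ ab ∈ {ab ∈ A ×ˢ B | numDenGcd ab.1 ab.2 = p}, ab.1 / ab.2 ∈ A / B := by
    intro ab hab
    obtain ⟨ha, hb⟩ := mem_product.1 (mem_filter.1 hab).1
    exact div_mem_div ha hb
  rw [card_eq_sum_card_fiberwise hmaps, ← smul_eq_mul]
  refine sum_le_card_nsmul _ _ _ fun q hq => ?_
  rw [filter_filter, sq]
  exact (card_filter_numDenGcd_div_eq_le hA hB p q).trans
    (Nat.mul_le_mul (hT q hq).1 (hT q hq).2)

theorem card_filter_mul_le_eq_sum_div (m : ℕ) :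
    #{p ∈ Icc 1 m ×ˢ Icc 1 m | p.1 * p.2 ≤ m} = ∑ r ∈ Icc 1 m, m / r := by
  rw [card_filter, sum_product]
  refine sum_congr rfl fun r hr => ?_
  have hr : 0 < r := (mem_Icc.1 hr).1
  have hfilter : {s ∈ Icc 1 m | r * s ≤ m} = Icc 1 (m / r) := by
    ext s
    simp only [mem_filter, mem_Icc, Nat.le_div_iff_mul_le hr, mul_comm s]
    constructor
    · rintro ⟨⟨hs, -⟩, hrs⟩; exact ⟨hs, hrs⟩
    · rintro ⟨hs, hrs⟩; exact ⟨⟨hs, le_trans (Nat.le_mul_of_pos_left s hr) hrs⟩, hrs⟩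
  rw [← card_filter, hfilter, Nat.card_Icc, Nat.add_sub_cancel]

theorem sum_div_le_mul_one_add_log (m : ℕ) :
    ((∑ r ∈ Icc 1 m, m / r : ℕ) : ℝ) ≤ m * (1 + Real.log m) := by
  calc ((∑ r ∈ Icc 1 m, m / r : ℕ) : ℝ) ≤ ∑ r ∈ Icc 1 m, (m : ℝ) / r := by
        push_cast
        exact sum_le_sum fun r _ => Nat.cast_div_le
    _ = m * harmonic m := by
        rw [harmonic_eq_sum_Icc]
        push_cast
        rw [mul_sum]
        rfl
    _ ≤ m * (1 + Real.log m) := by gcongr; exact harmonic_le_one_add_log m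

theorem card_filter_mul_le_le {t : Finset (ℕ × ℕ)} (ht : ∀ p ∈ t, 1 ≤ p.1 ∧ 1 ≤ p.2) {x : ℝ}
    (hx : 1 ≤ x) : (#{p ∈ t | ((p.1 * p.2 : ℕ) : ℝ) ≤ x} : ℝ) ≤ x * (1 + Real.log x) := by
  set m := ⌊x⌋₊
  have hm : (1 : ℝ) ≤ m := by exact_mod_cast Nat.le_floor (by exact_mod_cast hx)
  have hsub : {p ∈ t | ((p.1 * p.2 : ℕ) : ℝ) ≤ x} ⊆ {p ∈ Icc 1 m ×ˢ Icc 1 m | p.1 * p.2 ≤ m} := by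
    intro p hp
    obtain ⟨hpt, hpx⟩ := mem_filter.1 hp
    have hpm : p.1 * p.2 ≤ m := Nat.le_floor hpx
    obtain ⟨h1, h2⟩ := ht p hpt
    simp only [mem_filter, mem_product, mem_Icc]
    refine ⟨⟨⟨h1, ?_⟩, h2, ?_⟩, hpm⟩ <;> nlinarith
  calc (#{p ∈ t | ((p.1 * p.2 : ℕ) : ℝ) ≤ x} : ℝ) ≤ ((∑ r ∈ Icc 1 m, m / r : ℕ) : ℝ) := by
        rw [← card_filter_mul_le_eq_sum_div]; exact_mod_cast card_le_card hsub
    _ ≤ m * (1 + Real.log m) := sum_div_le_mul_one_add_log m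
    _ ≤ x * (1 + Real.log x) := by
        have hmx : (m : ℝ) ≤ x := Nat.floor_le (by linarith)
        have := Real.log_nonneg hm
        gcongr

theorem pos_of_mem_farey {Q Q' : ℝ} {a : ℚ} (ha : a ∈ farey Q Q') : 0 < a := by
  obtain ⟨q, q', hq, -, hq', -, rfl⟩ := ha
  positivity

theorem num_toNat_le_and_den_le_of_mem_farey {Q Q' : ℝ} {a : ℚ} (ha : a ∈ farey Q Q') :
    (a.num.toNat : ℝ) ≤ Q ∧ (a.den : ℝ) ≤ Q' := by
  obtain ⟨q, q', hq, hqQ, hq', hq'Q', rfl⟩ := ha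
  have hdivInt : (q : ℚ) / q' = Rat.divInt q q' := by rw [Rat.divInt_eq_div]; push_cast; rfl
  have hnum : ((q : ℚ) / q').num ≤ q :=
    hdivInt ▸ Int.le_of_dvd (by omega) (Rat.num_dvd _ (by omega))
  have hden : (((q : ℚ) / q').den : ℤ) ≤ q' := hdivInt ▸ Int.le_of_dvd (by omega) (Rat.den_dvd _ _)
  constructor
  · exact le_trans (by exact_mod_cast (Int.toNat_le.mpr hnum)) hqQ
  · exact le_trans (by exact_mod_cast hden) hq'Q'

theorem numDenGcd_mem_of_mem_farey {Q Q' : ℝ} {a : ℚ} (ha : a ∈ farey Q Q') (b : ℚ) :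
    numDenGcd a b ∈ {p ∈ Icc 1 ⌊Q⌋₊ ×ˢ Icc 1 ⌊Q'⌋₊ | p.1.Coprime p.2} := by
  have ha0 := pos_of_mem_farey ha
  have hnum : 0 < a.num.toNat := by simpa using ha0
  obtain ⟨haQ, haQ'⟩ := num_toNat_le_and_den_le_of_mem_farey ha
  simp only [mem_filter, mem_product, mem_Icc]
  refine ⟨⟨⟨Nat.gcd_pos_of_pos_left _ hnum, ?_⟩, Nat.gcd_pos_of_pos_left _ a.den_pos, ?_⟩,
    coprime_numDenGcd ha0.le b⟩
  · exact (Nat.gcd_le_left _ hnum).trans (Nat.le_floor haQ)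
  · exact (Nat.gcd_le_left _ a.den_pos).trans (Nat.le_floor haQ')

theorem num_toNat_div_le_and_den_div_le_of_mem_farey {Q Q' : ℝ} {a b : ℚ} (ha : a ∈ farey Q Q')
    (hb : b ∈ farey Q Q') :
    ((a / b).num.toNat : ℝ) ≤ Q * Q' ∧ ((a / b).den : ℝ) ≤ Q * Q' := by
  obtain ⟨hnum, hden⟩ := num_den_div_of_pos (pos_of_mem_farey ha) (pos_of_mem_farey hb)
  obtain ⟨haQ, haQ'⟩ := num_toNat_le_and_den_le_of_mem_farey ha
  obtain ⟨hbQ, hbQ'⟩ := num_toNat_le_and_den_le_of_mem_farey hb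
  have hnum_le : (a / b).num.toNat ≤ a.num.toNat * b.den :=
    hnum ▸ Nat.mul_le_mul (Nat.div_le_self _ _) (Nat.div_le_self _ _)
  have hden_le : (a / b).den ≤ a.den * b.num.toNat :=
    hden ▸ (Nat.mul_comm _ _ ▸ Nat.mul_le_mul (Nat.div_le_self _ _) (Nat.div_le_self _ _))
  constructor
  · calc ((a / b).num.toNat : ℝ) ≤ a.num.toNat * b.den := by exact_mod_cast hnum_le
      _ ≤ Q * Q' := by gcongr; exact (Nat.cast_nonneg _).trans haQ
  · calc ((a / b).den : ℝ) ≤ a.den * b.num.toNat := by exact_mod_cast hden_le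
      _ ≤ Q * Q' := by rw [mul_comm Q]; gcongr; exact (Nat.cast_nonneg _).trans haQ'

theorem card_divisors_le_Tmax {m : ℕ} {y : ℝ} (hm : 0 < m) (hmy : (m : ℝ) ≤ y) :
    #m.divisors ≤ Tmax y :=
  Finset.le_sup (f := fun m => #m.divisors) (mem_Icc.mpr ⟨hm, Nat.le_floor hmy⟩)

theorem card_divisors_le_Tmax_of_mem_div {Q Q' : ℝ} {A B : Finset ℚ} (hA : ↑A ⊆ farey Q Q')
    (hB : ↑B ⊆ farey Q Q') {q : ℚ} (hq : q ∈ A / B) :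
    #q.num.toNat.divisors ≤ Tmax (Q * Q') ∧ #q.den.divisors ≤ Tmax (Q * Q') := by
  obtain ⟨a, ha, b, hb, rfl⟩ := mem_div.1 hq
  obtain ⟨hnum, hden⟩ := num_toNat_div_le_and_den_div_le_of_mem_farey (hA ha) (hB hb)
  have hpos : 0 < (a / b).num.toNat := by
    simpa using div_pos (pos_of_mem_farey (hA ha)) (pos_of_mem_farey (hB hb))
  exact ⟨card_divisors_le_Tmax hpos hnum, card_divisors_le_Tmax (a / b).den_pos hden⟩

theorem sum_card_filter_numDenGcd_eq_le {Q Q' : ℝ} {A B : Finset ℚ} (hA : ↑A ⊆ farey Q Q')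
    (hB : ↑B ⊆ farey Q Q') {t : Finset (ℕ × ℕ)} (ht : ∀ p ∈ t, 1 ≤ p.1 ∧ 1 ≤ p.2) {x : ℝ}
    (hx : 1 ≤ x) :
    ((∑ p ∈ t with ((p.1 * p.2 : ℕ) : ℝ) ≤ x, #{ab ∈ A ×ˢ B | numDenGcd ab.1 ab.2 = p} : ℕ) : ℝ)
      ≤ x * (1 + Real.log x) * (#(A / B) * (Tmax (Q * Q') : ℝ) ^ 2) := by
  have hfiber : ∀ p, #{ab ∈ A ×ˢ B | numDenGcd ab.1 ab.2 = p} ≤ #(A / B) * Tmax (Q * Q') ^ 2 :=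
    card_filter_numDenGcd_eq_le (fun a ha => pos_of_mem_farey (hA ha))
      (fun b hb => pos_of_mem_farey (hB hb)) (fun q hq => card_divisors_le_Tmax_of_mem_div hA hB hq)
  calc _ ≤ (#{p ∈ t | ((p.1 * p.2 : ℕ) : ℝ) ≤ x} : ℝ)
        * ((#(A / B) * Tmax (Q * Q') ^ 2 : ℕ) : ℝ) := by
        rw [← Nat.cast_mul, Nat.cast_le]
        simpa only [smul_eq_mul] using sum_le_card_nsmul _ _ _ fun p _ => hfiber p
    _ ≤ _ := by
        rw [Nat.cast_mul, Nat.cast_pow]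
        gcongr
        exact card_filter_mul_le_le ht hx

theorem card_mul_card_le_tail_add {Q Q' : ℝ} {A B : Finset ℚ} (hA : ↑A ⊆ farey Q Q')
    (hB : ↑B ⊆ farey Q Q') {x : ℝ} (hx : 1 ≤ x) :
    (#A * #B : ℝ) ≤
      ((∑ p ∈ (Icc 1 ⌊Q⌋₊ ×ˢ Icc 1 ⌊Q'⌋₊).filter
          (fun p : ℕ × ℕ => p.1.Coprime p.2 ∧ x < ((p.1 * p.2 : ℕ) : ℝ)),
          #(subAt A p.1 p.2) * #(subAt B p.1 p.2) : ℕ) : ℝ)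
      + x * (1 + Real.log x) * (#(A / B) * (Tmax (Q * Q') : ℝ) ^ 2) := by
  set t := {p ∈ Icc 1 ⌊Q⌋₊ ×ˢ Icc 1 ⌊Q'⌋₊ | p.1.Coprime p.2}
  have ht : ∀ p ∈ t, 1 ≤ p.1 ∧ 1 ≤ p.2 := fun p hp => by
    simp only [t, mem_filter, mem_product, mem_Icc] at hp
    exact ⟨hp.1.1.1, hp.1.2.1⟩
  have hsplit := card_eq_sum_card_fiberwise (s := A ×ˢ B) (t := t) fun ab hab =>
    numDenGcd_mem_of_mem_farey (hA (mem_product.1 hab).1) ab.2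
  rw [← sum_filter_add_sum_filter_not t (fun p => x < ((p.1 * p.2 : ℕ) : ℝ)), filter_filter,
    card_product] at hsplit
  simp only [not_lt] at hsplit
  rw [← Nat.cast_mul, hsplit, Nat.cast_add]
  exact add_le_add
    (Nat.cast_le.2 (sum_le_sum fun p _ => card_filter_numDenGcd_eq_le_card_mul_card A B p))
    (sum_card_filter_numDenGcd_eq_le hA hB ht hx)

/-- Pairs `(r, s)` with a nonzero term have `r ≤ Q` and `s ≤ Q'`, so the tail sum over this
finite range is the full tail sum of the paper. -/
theorem card_div_of_tail_small_general (Q Q' : ℝ)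
    (A B : Finset ℚ) (hA : ↑A ⊆ farey Q Q') (hB : ↑B ⊆ farey Q Q')
    (x : ℝ) (hx : 1 ≤ x)
    (htail :
      ((∑ p ∈ ((Finset.Icc 1 ⌊Q⌋₊) ×ˢ (Finset.Icc 1 ⌊Q'⌋₊)).filter
          (fun p : ℕ × ℕ => Nat.Coprime p.1 p.2 ∧ x < ((p.1 * p.2 : ℕ) : ℝ)),
          (subAt A p.1 p.2).card * (subAt B p.1 p.2).card : ℕ) : ℝ)
        ≤ (A.card : ℝ) * B.card / 2) :
    (A.card : ℝ) * B.card / (2 * (Tmax (Q * Q') : ℝ) ^ 2 * x * (1 + Real.log x))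
      ≤ ((A / B).card : ℝ) := by
  have hlog := Real.log_nonneg hx
  refine div_le_of_le_mul₀ (by positivity) (Nat.cast_nonneg _) ?_
  have := card_mul_card_le_tail_add hA hB hx
  linarith

/-- If `Σ_{gcd(r,s)=1, rs > x} |A_{r/s}||B_{r/s}| ≤ |A||B|/2`, then
`|A/B| ≥ |A||B| / (2T²x(1 + log x))`.  (All pairs with nonzero contribution have
`r ≤ Q`, `s ≤ Q'`, so the sum over that finite range is the full sum.) -/
theorem card_div_of_tail_small (Q Q' : ℝ) (hQ : 1 ≤ Q) (hQ' : 1 ≤ Q')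
    (A B : Finset ℚ) (hA : ↑A ⊆ farey Q Q') (hB : ↑B ⊆ farey Q Q')
    (x : ℝ) (hx : 1 ≤ x)
    (htail :
      ((∑ p ∈ ((Finset.Icc 1 ⌊Q⌋₊) ×ˢ (Finset.Icc 1 ⌊Q'⌋₊)).filter
          (fun p : ℕ × ℕ => Nat.Coprime p.1 p.2 ∧ x < ((p.1 * p.2 : ℕ) : ℝ)),
          (subAt A p.1 p.2).card * (subAt B p.1 p.2).card : ℕ) : ℝ)
        ≤ (A.card : ℝ) * B.card / 2) :
    (A.card : ℝ) * B.card / (2 * (Tmax (Q * Q') : ℝ) ^ 2 * x * (1 + Real.log x))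
      ≤ ((A / B).card : ℝ) :=
  card_div_of_tail_small_general Q Q' A B hA hB x hx htail
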